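/- Let S be a continuous finitely generated free semigroup action on a compact metric space X. Then the set of full entropy points is nonempty: there exists x₀ ∈ X such that every closed neighborhood K of x₀ satisfies h_top(K, S) = h_top(X, S). -/

import Mathlib

open Set Filter Topology

noncomputable section

variable {X Y : Type*} [MetricSpace X] [MetricSpace Y]

/-- The Bowen/dynamical metric along a word, given as the list of maps to be applied
(in order of application). -/
def dynDist : List (X → X) → X → X → ℝ
  | [], x, y => dist x y
  | f :: w, x, y => max (dist x y) (dynDist w (f x) (f y))

/-- A set `E` is `(w, ε)`-separated if distinct points of `E` are at `dynDist w`-distance `> ε`. -/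
def IsDynSeparated (w : List (X → X)) (ε : ℝ) (E : Set X) : Prop :=
  E.Pairwise fun x y => ε < dynDist w x y

/-- A set `F` is `(w, ε)`-spanning for `K` if every point of `K` is at
`dynDist w`-distance `< ε` of a point of `F`. -/
def IsDynSpanning (w : List (X → X)) (ε : ℝ) (K F : Set X) : Prop :=
  ∀ x ∈ K, ∃ y ∈ F, dynDist w x y < ε

/-- `s(K, w, ε)`: maximal cardinality of a `(w, ε)`-separated subset of `K`. -/
def sepCard (K : Set X) (w : List (X → X)) (ε : ℝ) : ℕ :=
  sSup {n | ∃ E : Finset X, ↑E ⊆ K ∧ IsDynSeparated w ε (↑E : Set X) ∧ E.card = n}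

/-- `b(K, w, ε)`: minimal cardinality of a `(w, ε)`-spanning subset of `K`. -/
def spanCard (K : Set X) (w : List (X → X)) (ε : ℝ) : ℕ :=
  sInf {n | ∃ F : Finset X, ↑F ⊆ K ∧ IsDynSpanning w ε K (↑F : Set X) ∧ F.card = n}

variable {p : ℕ}

/-- `S_n(K, 𝕊, ε)`: averaged count of maximal separated sets over all words of length `n`. -/
def SepSum (g : Fin p → X → X) (K : Set X) (n : ℕ) (ε : ℝ) : ℝ :=
  (1 / (p : ℝ) ^ n) * ∑ u : Fin n → Fin p, (sepCard K ((List.ofFn u).map g) ε : ℝ)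

/-- Averaged count of minimal spanning sets over all words of length `n`. -/
def SpanSum (g : Fin p → X → X) (K : Set X) (n : ℕ) (ε : ℝ) : ℝ :=
  (1 / (p : ℝ) ^ n) * ∑ u : Fin n → Fin p, (spanCard K ((List.ofFn u).map g) ε : ℝ)

/-- `S_d(K, 𝕊, ε)`: exponential growth rate of `SepSum`. -/
def SepRate (g : Fin p → X → X) (K : Set X) (ε : ℝ) : EReal :=
  Filter.limsup (fun n : ℕ => ((Real.log (SepSum g K n ε) / n : ℝ) : EReal)) Filter.atTop

/-- `B_d(K, 𝕊, ε)`: exponential growth rate of `SpanSum`. -/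
def SpanRate (g : Fin p → X → X) (K : Set X) (ε : ℝ) : EReal :=
  Filter.limsup (fun n : ℕ => ((Real.log (SpanSum g K n ε) / n : ℝ) : EReal)) Filter.atTop

/-- Bufetov topological entropy `h_top(K, 𝕊)` of the free semigroup action generated by `g`
restricted to `K`: the limit (= supremum, by monotonicity) of `SepRate` as `ε → 0⁺`. -/
def semigroupEntropy (g : Fin p → X → X) (K : Set X) : EReal :=
  ⨆ ε : {ε : ℝ // 0 < ε}, SepRate g K (ε : ℝ)

/-- `x` is an entropy point: every closed neighbourhood has positive entropy. -/
def IsEntropyPoint (g : Fin p → X → X) (x : X) : Prop :=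
  ∀ K : Set X, K ∈ nhds x → IsClosed K → 0 < semigroupEntropy g K

/-- `x` is a full entropy point: every closed neighbourhood carries full entropy. -/
def IsFullEntropyPoint (g : Fin p → X → X) (x : X) : Prop :=
  ∀ K : Set X, K ∈ nhds x → IsClosed K → semigroupEntropy g K = semigroupEntropy g Set.univ

/-- Bowen entropy growth rate of a single map `F` on `C` at scale `ε`. -/
def mapSepRate (F : Y → Y) (C : Set Y) (ε : ℝ) : EReal :=
  Filter.limsup
    (fun n : ℕ => ((Real.log (sepCard C (List.replicate n F) ε) / n : ℝ) : EReal)) Filter.atTop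

/-- Classical Bowen topological entropy of a single map `F` on a subset `C`. -/
def mapEntropy (F : Y → Y) (C : Set Y) : EReal :=
  ⨆ ε : {ε : ℝ // 0 < ε}, mapSepRate F C (ε : ℝ)

/-- Spanning growth rate of a single map. -/
def mapSpanRate (F : Y → Y) (C : Set Y) (ε : ℝ) : EReal :=
  Filter.limsup
    (fun n : ℕ => ((Real.log (spanCard C (List.replicate n F) ε) / n : ℝ) : EReal)) Filter.atTop

/-- `h_d(x, ε)` for the semigroup action: infimum of `SpanRate` over compact neighbourhoods. -/
def hdEps (g : Fin p → X → X) (x : X) (ε : ℝ) : EReal :=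
  ⨅ K : {K : Set X // K ∈ nhds x ∧ IsCompact K}, SpanRate g (K : Set X) ε

/-- The entropy function `h_top(x)` of the semigroup action. -/
def entropyFn (g : Fin p → X → X) (x : X) : EReal :=
  ⨆ ε : {ε : ℝ // 0 < ε}, hdEps g x (ε : ℝ)

/-- `h_{D}(y, ε)` for a single map. -/
def mapHdEps (F : Y → Y) (y : Y) (ε : ℝ) : EReal :=
  ⨅ C : {C : Set Y // C ∈ nhds y ∧ IsCompact C}, mapSpanRate F (C : Set Y) ε

/-- The entropy function of a single map. -/
def mapEntropyFn (F : Y → Y) (y : Y) : EReal :=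
  ⨆ ε : {ε : ℝ // 0 < ε}, mapHdEps F y (ε : ℝ)

/-- The step skew-product `F_G(ω, x) = (σω, g_{ω₀}(x))` on `(ℕ → Fin p) × X`. -/
def skewProduct (g : Fin p → X → X) : ((ℕ → Fin p) × X) → ((ℕ → Fin p) × X) :=
  fun q => (fun n => q.1 (n + 1), g (q.1 0) q.2)

/-- The cylinder `[w₁ … w_ℓ]` in `Σ_p⁺ = ℕ → Fin p`. -/
def cylinder {ℓ : ℕ} (w : Fin ℓ → Fin p) : Set (ℕ → Fin p) :=
  {ω | ∀ i : Fin ℓ, ω (i : ℕ) = w i}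

attribute [local instance] PiNat.metricSpace

section EntropyProof

lemma dynDist_self (w : List (X → X)) (x : X) : dynDist w x x = 0 := by
  induction w generalizing x with
  | nil => simp [dynDist]
  | cons f w ih => simp [dynDist, ih]

lemma dynDist_comm (w : List (X → X)) (x y : X) : dynDist w x y = dynDist w y x := by
  induction w generalizing x y with
  | nil => simp [dynDist, dist_comm]
  | cons f w ih => simp [dynDist, dist_comm, ih]

lemma dynDist_triangle (w : List (X → X)) (x y z : X) :
    dynDist w x z ≤ dynDist w x y + dynDist w y z := by
  induction w generalizing x y z with
  | nil => exact dist_triangle x y z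
  | cons f w ih =>
    simp only [dynDist]
    refine max_le ?_ ?_
    · exact (dist_triangle x y z).trans (add_le_add (le_max_left _ _) (le_max_left _ _))
    · exact (ih (f x) (f y) (f z)).trans (add_le_add (le_max_right _ _) (le_max_right _ _))

lemma continuous_dynDist (w : List (X → X)) (hw : ∀ f ∈ w, Continuous f) :
    Continuous fun q : X × X => dynDist w q.1 q.2 := by
  induction w with
  | nil => exact continuous_dist
  | cons f w ih =>
    have hf : Continuous f := hw f List.mem_cons_self
    have h2 := ih fun g hg => hw g (List.mem_cons_of_mem _ hg)
    show Continuous fun q : X × X => max (dist q.1 q.2) (dynDist w (f q.1) (f q.2))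
    exact continuous_dist.max
      (h2.comp ((hf.comp continuous_fst).prodMk (hf.comp continuous_snd)))

variable [CompactSpace X]

lemma sepSet_bddAbove (K : Set X) (w : List (X → X)) (hw : ∀ f ∈ w, Continuous f)
    {ε : ℝ} (hε : 0 < ε) :
    BddAbove {n | ∃ E : Finset X, ↑E ⊆ K ∧ IsDynSeparated w ε (↑E : Set X) ∧ E.card = n} := by
  obtain ⟨t, ht⟩ := isCompact_univ.elim_finite_subcover
      (fun x : X => {y | dynDist w x y < ε / 2})
      (fun x => by
        have : Continuous fun y => dynDist w x y :=
          (continuous_dynDist w hw).comp (Continuous.prodMk_right x)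
        exact isOpen_lt this continuous_const)
      (fun y _ => Set.mem_iUnion.2 ⟨y, by simp [dynDist_self, half_pos hε]⟩)
  refine ⟨t.card, ?_⟩
  rintro n ⟨E, hEK, hEsep, rfl⟩
  have hch : ∀ e ∈ E, ∃ c ∈ t, dynDist w c e < ε / 2 := by
    intro e _
    have := ht (Set.mem_univ e)
    simpa using this
  choose! c hct hc using hch
  refine Finset.card_le_card_of_injOn c (fun a ha => hct a ha) ?_
  intro a ha b hb hab
  by_contra hne
  have hsep := hEsep ha hb hne
  have h1 : dynDist w a (c a) < ε / 2 := by rw [dynDist_comm]; exact hc a ha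
  have h2 : dynDist w (c a) b < ε / 2 := hab ▸ hc b hb
  have := dynDist_triangle w a (c a) b
  linarith

lemma sepCard_mono {K K' : Set X} (h : K ⊆ K') (w : List (X → X)) (hw : ∀ f ∈ w, Continuous f)
    {ε : ℝ} (hε : 0 < ε) : sepCard K w ε ≤ sepCard K' w ε := by
  refine csSup_le_csSup (sepSet_bddAbove K' w hw hε)
    ⟨0, ∅, by simp, by simp [IsDynSeparated], rfl⟩ ?_
  rintro n ⟨E, hE, hs, hc⟩
  exact ⟨E, hE.trans h, hs, hc⟩

lemma one_le_sepCard {K : Set X} (hK : K.Nonempty) (w : List (X → X))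
    (hw : ∀ f ∈ w, Continuous f) {ε : ℝ} (hε : 0 < ε) : 1 ≤ sepCard K w ε := by
  obtain ⟨x, hx⟩ := hK
  exact le_csSup (sepSet_bddAbove K w hw hε)
    ⟨{x}, by simpa, by simp [IsDynSeparated], Finset.card_singleton x⟩

lemma sepCard_union_le (K₁ K₂ : Set X) (w : List (X → X)) (hw : ∀ f ∈ w, Continuous f)
    {ε : ℝ} (hε : 0 < ε) :
    sepCard (K₁ ∪ K₂) w ε ≤ sepCard K₁ w ε + sepCard K₂ w ε := by
  classical
  refine csSup_le ⟨0, ∅, by simp, by simp [IsDynSeparated], rfl⟩ ?_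
  rintro n ⟨E, hEK, hEs, rfl⟩
  have h1 : (E.filter (· ∈ K₁)).card ≤ sepCard K₁ w ε := by
    refine le_csSup (sepSet_bddAbove K₁ w hw hε) ⟨E.filter (· ∈ K₁), ?_, ?_, rfl⟩
    · intro x hx
      simpa using (Finset.mem_filter.1 (by simpa using hx)).2
    · exact hEs.mono (by exact_mod_cast Finset.filter_subset _ _)
  have h2 : (E.filter (fun x => ¬ x ∈ K₁)).card ≤ sepCard K₂ w ε := by
    refine le_csSup (sepSet_bddAbove K₂ w hw hε) ⟨E.filter (fun x => ¬ x ∈ K₁), ?_, ?_, rfl⟩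
    · intro x hx
      simp only [Finset.coe_filter, Set.mem_setOf_eq] at hx
      rcases hEK hx.1 with h | h
      · exact absurd h hx.2
      · exact h
    · exact hEs.mono (by exact_mod_cast Finset.filter_subset _ _)
  calc E.card = (E.filter (· ∈ K₁)).card + (E.filter (fun x => ¬ x ∈ K₁)).card :=
        (Finset.card_filter_add_card_filter_not _).symm
    _ ≤ sepCard K₁ w ε + sepCard K₂ w ε := add_le_add h1 h2

variable [NeZero p]

lemma word_cont {g : Fin p → X → X} (hg : ∀ i, Continuous (g i)) {n : ℕ} (u : Fin n → Fin p) :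
    ∀ f ∈ (List.ofFn u).map g, Continuous f := by
  intro f hf
  obtain ⟨i, -, rfl⟩ := List.mem_map.1 hf
  exact hg i

lemma one_le_SepSum (g : Fin p → X → X) (hg : ∀ i, Continuous (g i)) {K : Set X}
    (hK : K.Nonempty) (n : ℕ) {ε : ℝ} (hε : 0 < ε) : 1 ≤ SepSum g K n ε := by
  have hp : (0 : ℝ) < (p : ℝ) ^ n := by
    have : (0 : ℝ) < (p : ℝ) := by exact_mod_cast Nat.pos_of_ne_zero (NeZero.ne p)
    positivity
  have hcard : ∀ u : Fin n → Fin p, (1 : ℝ) ≤ (sepCard K ((List.ofFn u).map g) ε : ℝ) := by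
    intro u
    exact_mod_cast one_le_sepCard hK _ (word_cont hg u) hε
  have hsum : ((p : ℝ) ^ n) ≤ ∑ u : Fin n → Fin p, (sepCard K ((List.ofFn u).map g) ε : ℝ) := by
    calc ((p : ℝ) ^ n) = ∑ _u : Fin n → Fin p, (1 : ℝ) := by
          simp [Finset.card_univ]
      _ ≤ _ := Finset.sum_le_sum fun u _ => hcard u
  rw [SepSum]
  calc (1 : ℝ) = (1 / (p : ℝ) ^ n) * ((p : ℝ) ^ n) := by field_simp
    _ ≤ _ := by
        apply mul_le_mul_of_nonneg_left hsum (by positivity)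

lemma SepSum_mono (g : Fin p → X → X) (hg : ∀ i, Continuous (g i)) {K K' : Set X}
    (h : K ⊆ K') (n : ℕ) {ε : ℝ} (hε : 0 < ε) : SepSum g K n ε ≤ SepSum g K' n ε := by
  rw [SepSum, SepSum]
  apply mul_le_mul_of_nonneg_left _ (by positivity)
  refine Finset.sum_le_sum fun u _ => ?_
  exact_mod_cast sepCard_mono h _ (word_cont hg u) hε

lemma SepSum_union_le (g : Fin p → X → X) (hg : ∀ i, Continuous (g i)) (K₁ K₂ : Set X)
    (n : ℕ) {ε : ℝ} (hε : 0 < ε) :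
    SepSum g (K₁ ∪ K₂) n ε ≤ SepSum g K₁ n ε + SepSum g K₂ n ε := by
  rw [SepSum, SepSum, SepSum, ← mul_add, ← Finset.sum_add_distrib]
  apply mul_le_mul_of_nonneg_left _ (by positivity)
  refine Finset.sum_le_sum fun u _ => ?_
  exact_mod_cast sepCard_union_le K₁ K₂ _ (word_cont hg u) hε

lemma sepRate_mono (g : Fin p → X → X) (hg : ∀ i, Continuous (g i)) {K K' : Set X}
    (h : K ⊆ K') (hK : K.Nonempty) {ε : ℝ} (hε : 0 < ε) : SepRate g K ε ≤ SepRate g K' ε := by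
  refine Filter.limsup_le_limsup (Filter.Eventually.of_forall fun n => ?_)
  have h1 : 1 ≤ SepSum g K n ε := one_le_SepSum g hg hK n hε
  have h2 : SepSum g K n ε ≤ SepSum g K' n ε := SepSum_mono g hg h n hε
  have hlog : Real.log (SepSum g K n ε) ≤ Real.log (SepSum g K' n ε) :=
    Real.log_le_log (by linarith) h2
  have : Real.log (SepSum g K n ε) / n ≤ Real.log (SepSum g K' n ε) / n :=
    div_le_div_of_nonneg_right hlog n.cast_nonneg
  exact EReal.coe_le_coe_iff.2 this

lemma sepRate_union_le (g : Fin p → X → X) (hg : ∀ i, Continuous (g i)) {K₁ K₂ : Set X}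
    (h₁ : K₁.Nonempty) (h₂ : K₂.Nonempty) {ε : ℝ} (hε : 0 < ε) :
    SepRate g (K₁ ∪ K₂) ε ≤ SepRate g K₁ ε ⊔ SepRate g K₂ ε := by
  have key : ∀ n : ℕ, Real.log (SepSum g (K₁ ∪ K₂) n ε) / n ≤
      Real.log 2 / n + max (Real.log (SepSum g K₁ n ε) / n) (Real.log (SepSum g K₂ n ε) / n) := by
    intro n
    have ha : 1 ≤ SepSum g K₁ n ε := one_le_SepSum g hg h₁ n hε
    have hb : 1 ≤ SepSum g K₂ n ε := one_le_SepSum g hg h₂ n hε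
    set s₁ := SepSum g K₁ n ε
    set s₂ := SepSum g K₂ n ε
    have hle : SepSum g (K₁ ∪ K₂) n ε ≤ 2 * max s₁ s₂ := by
      have h := SepSum_union_le g hg K₁ K₂ n hε
      have := le_max_left s₁ s₂
      have := le_max_right s₁ s₂
      linarith
    have hlog : Real.log (SepSum g (K₁ ∪ K₂) n ε) ≤
        Real.log 2 + max (Real.log s₁) (Real.log s₂) := by
      have hpos : (0 : ℝ) < max s₁ s₂ := lt_of_lt_of_le one_pos (le_trans ha (le_max_left _ _))
      have h0 : 0 < SepSum g (K₁ ∪ K₂) n ε :=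
        lt_of_lt_of_le one_pos (one_le_SepSum g hg (h₁.mono Set.subset_union_left) n hε)
      calc Real.log (SepSum g (K₁ ∪ K₂) n ε) ≤ Real.log (2 * max s₁ s₂) :=
            Real.log_le_log h0 hle
        _ = Real.log 2 + Real.log (max s₁ s₂) := Real.log_mul two_ne_zero hpos.ne'
        _ = Real.log 2 + max (Real.log s₁) (Real.log s₂) := by
            rcases le_total s₁ s₂ with h | h
            · rw [max_eq_right h, max_eq_right (Real.log_le_log (by linarith) h)]
            · rw [max_eq_left h, max_eq_left (Real.log_le_log (by linarith) h)]
    calc Real.log (SepSum g (K₁ ∪ K₂) n ε) / n ≤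
        (Real.log 2 + max (Real.log s₁) (Real.log s₂)) / n :=
          div_le_div_of_nonneg_right hlog n.cast_nonneg
      _ = Real.log 2 / n + max (Real.log s₁) (Real.log s₂) / n := add_div _ _ _
      _ ≤ Real.log 2 / n + max (Real.log s₁ / n) (Real.log s₂ / n) := by
          gcongr
          rcases le_total (Real.log s₁) (Real.log s₂) with h | h
          · rw [max_eq_right h]; exact le_max_right _ _
          · rw [max_eq_left h]; exact le_max_left _ _
  set L := SepRate g K₁ ε ⊔ SepRate g K₂ ε with hL
  have claim : ∀ c' : ℝ, L < (c' : EReal) → SepRate g (K₁ ∪ K₂) ε ≤ (c' : EReal) := by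
    intro c' hc'
    obtain ⟨c, hc1, hc2⟩ := EReal.exists_between_coe_real hc'
    have hcc' : c < c' := by exact_mod_cast hc2
    have hAe : ∀ᶠ n in Filter.atTop,
        ((Real.log (SepSum g K₁ n ε) / n : ℝ) : EReal) < (c : EReal) :=
      Filter.eventually_lt_of_limsup_lt (lt_of_le_of_lt (le_sup_left.trans_eq hL.symm) hc1)
    have hBe : ∀ᶠ n in Filter.atTop,
        ((Real.log (SepSum g K₂ n ε) / n : ℝ) : EReal) < (c : EReal) :=
      Filter.eventually_lt_of_limsup_lt (lt_of_le_of_lt (le_sup_right.trans_eq hL.symm) hc1)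
    have hde : ∀ᶠ n : ℕ in Filter.atTop, Real.log 2 / (n : ℝ) < c' - c :=
      (tendsto_const_div_atTop_nhds_zero_nat (Real.log 2)).eventually_lt_const
        (by linarith : (0:ℝ) < c' - c)
    refine Filter.limsup_le_of_le (by isBoundedDefault) ?_
    filter_upwards [hAe, hBe, hde] with n hA' hB' hd
    have hA'' : Real.log (SepSum g K₁ n ε) / n < c := by exact_mod_cast hA'
    have hB'' : Real.log (SepSum g K₂ n ε) / n < c := by exact_mod_cast hB'
    have : Real.log (SepSum g (K₁ ∪ K₂) n ε) / n < c' := by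
      have := key n
      have hm : max (Real.log (SepSum g K₁ n ε) / n) (Real.log (SepSum g K₂ n ε) / n) < c :=
        max_lt hA'' hB''
      linarith
    exact EReal.coe_le_coe_iff.2 this.le
  by_contra hcon
  obtain ⟨c', h1, h2⟩ := EReal.exists_between_coe_real (not_le.1 hcon)
  exact absurd (claim c' h1) (not_le.2 h2)

lemma semigroupEntropy_mono (g : Fin p → X → X) (hg : ∀ i, Continuous (g i)) {K K' : Set X}
    (h : K ⊆ K') (hK : K.Nonempty) : semigroupEntropy g K ≤ semigroupEntropy g K' :=
  iSup_mono fun ε => sepRate_mono g hg h hK ε.2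

lemma semigroupEntropy_union_le (g : Fin p → X → X) (hg : ∀ i, Continuous (g i)) {K₁ K₂ : Set X}
    (h₁ : K₁.Nonempty) (h₂ : K₂.Nonempty) :
    semigroupEntropy g (K₁ ∪ K₂) ≤ semigroupEntropy g K₁ ⊔ semigroupEntropy g K₂ := by
  rw [semigroupEntropy, semigroupEntropy, semigroupEntropy, ← iSup_sup_eq]
  exact iSup_mono fun ε => sepRate_union_le g hg h₁ h₂ ε.2

lemma semigroupEntropy_biUnion_le (g : Fin p → X → X) (hg : ∀ i, Continuous (g i))
    {ι : Type*} (s : Finset ι) (hs : s.Nonempty) (A : ι → Set X)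
    (hA : ∀ i ∈ s, (A i).Nonempty) :
    ∃ i ∈ s, semigroupEntropy g (⋃ j ∈ s, A j) ≤ semigroupEntropy g (A i) := by
  classical
  induction s using Finset.cons_induction with
  | empty => exact absurd hs (by simp)
  | cons a s ha ih =>
    rcases s.eq_empty_or_nonempty with rfl | hs'
    · exact ⟨a, by simp, by simp⟩
    · have hA' : ∀ i ∈ s, (A i).Nonempty := fun i hi => hA i (Finset.mem_cons_of_mem hi)
      obtain ⟨i, hi, hle⟩ := ih hs' hA'
      obtain ⟨i₀, hi₀⟩ := hs'
      obtain ⟨x₀, hx₀⟩ := hA' i₀ hi₀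
      have hne2 : (⋃ j ∈ s, A j).Nonempty := ⟨x₀, Set.mem_biUnion hi₀ hx₀⟩
      have hub : (⋃ j ∈ Finset.cons a s ha, A j) = A a ∪ ⋃ j ∈ s, A j := by
        simp [Set.iUnion_or, Set.iUnion_union_distrib]
      have h2 := semigroupEntropy_union_le g hg (hA a (Finset.mem_cons_self a s)) hne2
      rw [← hub] at h2
      rcases le_total (semigroupEntropy g (A a)) (semigroupEntropy g (⋃ j ∈ s, A j)) with h | h
      · refine ⟨i, Finset.mem_cons_of_mem hi, ?_⟩
        calc semigroupEntropy g (⋃ j ∈ Finset.cons a s ha, A j) ≤ _ := h2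
          _ = semigroupEntropy g (⋃ j ∈ s, A j) := sup_eq_right.2 h
          _ ≤ _ := hle
      · refine ⟨a, Finset.mem_cons_self a s, ?_⟩
        calc semigroupEntropy g (⋃ j ∈ Finset.cons a s ha, A j) ≤ _ := h2
          _ = semigroupEntropy g (A a) := sup_eq_left.2 h

lemma exists_small_piece (g : Fin p → X → X) (hg : ∀ i, Continuous (g i)) {C : Set X}
    (hC : IsClosed C) (hne : C.Nonempty) {r : ℝ} (hr : 0 < r) :
    ∃ C' : Set X, IsClosed C' ∧ C'.Nonempty ∧ C' ⊆ C ∧ (∃ x, C' ⊆ Metric.closedBall x r) ∧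
      semigroupEntropy g C ≤ semigroupEntropy g C' := by
  have hcomp : IsCompact C := hC.isCompact
  obtain ⟨b, hbC, hbfin, hcov⟩ := hcomp.elim_finite_subcover_image (b := C)
      (c := fun x => Metric.ball x r) (fun x _ => Metric.isOpen_ball)
      (fun y hy => Set.mem_biUnion hy (Metric.mem_ball_self hr))
  classical
  set s : Finset X := hbfin.toFinset with hsdef
  have hmem : ∀ x, x ∈ s ↔ x ∈ b := fun x => hbfin.mem_toFinset
  have hCs : C = ⋃ x ∈ s, (Metric.closedBall x r ∩ C) := by
    apply Set.Subset.antisymm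
    · intro y hy
      obtain ⟨x, hxb, hxy⟩ := Set.mem_iUnion₂.1 (hcov hy)
      exact Set.mem_biUnion ((hmem x).2 hxb) ⟨Metric.ball_subset_closedBall hxy, hy⟩
    · intro y hy
      obtain ⟨x, -, -, hyC⟩ := Set.mem_iUnion₂.1 hy
      exact hyC
  have hsne : s.Nonempty := by
    obtain ⟨y, hy⟩ := hne
    rw [hCs] at hy
    obtain ⟨x, hx, -⟩ := Set.mem_iUnion₂.1 hy
    exact ⟨x, hx⟩
  obtain ⟨x, hxs, hle⟩ := semigroupEntropy_biUnion_le g hg s hsne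
      (fun x => Metric.closedBall x r ∩ C)
      (fun x hx => ⟨x, Metric.mem_closedBall_self hr.le, hbC ((hmem x).1 hx)⟩)
  refine ⟨Metric.closedBall x r ∩ C, Metric.isClosed_closedBall.inter hC,
    ⟨x, Metric.mem_closedBall_self hr.le, hbC ((hmem x).1 hxs)⟩,
    Set.inter_subset_right, ⟨x, Set.inter_subset_left⟩, ?_⟩
  have heq : semigroupEntropy g C =
      semigroupEntropy g (⋃ x ∈ s, (Metric.closedBall x r ∩ C)) := by rw [← hCs]
  exact heq.trans_le hle

end EntropyProof

/-- the set of full entropy points of a continuous finitely generated free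
semigroup action on a compact metric space is nonempty. -/
theorem exists_fullEntropyPoint [CompactSpace X] [Nonempty X] {p : ℕ} [NeZero p]
    (g : Fin p → X → X) (hg : ∀ i, Continuous (g i)) :
    ∃ x : X, IsFullEntropyPoint g x := by
  classical
  have step : ∀ (n : ℕ)
      (C : {C : Set X // IsClosed C ∧ C.Nonempty ∧
        semigroupEntropy g Set.univ ≤ semigroupEntropy g C}),
      ∃ C' : {C : Set X // IsClosed C ∧ C.Nonempty ∧
        semigroupEntropy g Set.univ ≤ semigroupEntropy g C},
        C'.1 ⊆ C.1 ∧ ∃ x, C'.1 ⊆ Metric.closedBall x ((1/2 : ℝ) ^ n) := by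
    intro n C
    obtain ⟨C', h1, h2, h3, h4, h5⟩ :=
      exists_small_piece g hg C.2.1 C.2.2.1 (pow_pos one_half_pos n)
    exact ⟨⟨C', h1, h2, C.2.2.2.trans h5⟩, h3, h4⟩
  choose next hsub hball using step
  let seq : ℕ → {C : Set X // IsClosed C ∧ C.Nonempty ∧
      semigroupEntropy g Set.univ ≤ semigroupEntropy g C} :=
    fun n => Nat.rec ⟨Set.univ, isClosed_univ, Set.univ_nonempty, le_refl _⟩
      (fun n C => next n C) n
  have hseq : ∀ n, seq (n + 1) = next n (seq n) := fun n => rfl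
  have hmono : ∀ n, (seq (n + 1)).1 ⊆ (seq n).1 := fun n => hsub n (seq n)
  obtain ⟨x₀, hx₀⟩ := IsCompact.nonempty_iInter_of_sequence_nonempty_isCompact_isClosed
    (fun n => (seq n).1) hmono (fun n => (seq n).2.2.1)
    ((seq 0).2.1.isCompact) (fun n => (seq n).2.1)
  refine ⟨x₀, ?_⟩
  intro K hK _
  have hx : ∀ n, x₀ ∈ (seq n).1 := fun n => Set.mem_iInter.1 hx₀ n
  have hKne : K.Nonempty := ⟨x₀, mem_of_mem_nhds hK⟩
  have hup : semigroupEntropy g K ≤ semigroupEntropy g Set.univ :=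
    semigroupEntropy_mono g hg (Set.subset_univ K) hKne
  obtain ⟨δ, hδ, hballK⟩ := Metric.mem_nhds_iff.1 hK
  obtain ⟨n, hn⟩ : ∃ n : ℕ, (1/2 : ℝ) ^ n < δ / 4 :=
    exists_pow_lt_of_lt_one (by positivity) (by norm_num)
  obtain ⟨c, hc⟩ := hball n (seq n)
  have hsubK : (seq (n + 1)).1 ⊆ K := by
    intro y hy
    apply hballK
    have h1 : dist y c ≤ (1/2 : ℝ) ^ n := hc hy
    have h2 : dist x₀ c ≤ (1/2 : ℝ) ^ n := hc (hx (n + 1))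
    rw [Metric.mem_ball]
    calc dist y x₀ ≤ dist y c + dist x₀ c := dist_triangle_right y x₀ c
      _ < δ := by linarith
  have hlow : semigroupEntropy g Set.univ ≤ semigroupEntropy g K :=
    (seq (n + 1)).2.2.2.trans (semigroupEntropy_mono g hg hsubK (seq (n + 1)).2.2.1)
  exact le_antisymm hup hlow
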